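/- arXiv:2207.08955 — 8 statements merged into one kernel-verified Lean document; each statement's English description precedes it below -/
import Mathlib

section
/- Fix v̂ : 𝒯 → {0,1}. For every dual feasible pair (λ̃,μ̃) there exists a dual feasible pair (λ̂,μ̂) such that λ̂_t = (0,0,0) for every t ∈ 𝒯 with v̂_t = 0 and Obj(λ̂,μ̂) = Obj(λ̃,μ̃). -/
open Finset

/-- `(lam, μ)` is feasible for the dual of the McCormick relaxation LP. -/
def DualFeasible (n : ℕ) (T : Finset (Finset (Fin n) × Finset (Fin n)))
    (N : Finset (Finset (Fin n))) (β : Finset (Fin n) → ℝ)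
    (lam : Finset (Fin n) × Finset (Fin n) → Fin 3 → ℝ)
    (μ : Finset (Fin n) → ℝ) : Prop :=
  (∀ t ∈ T, ∀ j, 0 ≤ lam t j) ∧ (∀ J ∈ N, 0 ≤ μ J) ∧
  ∀ J ∈ N,
    β J + ∑ t ∈ T.filter (fun t => t.1 = J), (-lam t 0 + lam t 2)
        + ∑ t ∈ T.filter (fun t => t.2 = J), (-lam t 1 + lam t 2)
        + ∑ t ∈ T.filter (fun t => t.1 ∪ t.2 = J), (lam t 0 + lam t 1 - lam t 2)
        + μ J ≥ 0

/-- The dual objective. -/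
def DualObj (n : ℕ) (T : Finset (Finset (Fin n) × Finset (Fin n)))
    (N : Finset (Finset (Fin n))) (vh : Finset (Fin n) × Finset (Fin n) → ℝ)
    (lam : Finset (Fin n) × Finset (Fin n) → Fin 3 → ℝ)
    (μ : Finset (Fin n) → ℝ) : ℝ :=
  -∑ t ∈ T, ((1 - vh t) * (lam t 0 + lam t 1) + (2 - vh t) * lam t 2)
    - ∑ J ∈ N, μ J

theorem stmt_2 (n : ℕ)
    (T : Finset (Finset (Fin n) × Finset (Fin n)))
    (hT : ∀ t ∈ T, t.1.Nonempty ∧ t.2.Nonempty ∧ Disjoint t.1 t.2)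
    (N : Finset (Finset (Fin n)))
    (hNne : ∀ J ∈ N, J.Nonempty)
    (hTN : ∀ t ∈ T, t.1 ∈ N ∧ t.2 ∈ N ∧ t.1 ∪ t.2 ∈ N)
    (β : Finset (Fin n) → ℝ)
    (vh : Finset (Fin n) × Finset (Fin n) → ℝ)
    (hv : ∀ t ∈ T, vh t = 0 ∨ vh t = 1)
    (lamT : Finset (Fin n) × Finset (Fin n) → Fin 3 → ℝ)
    (μT : Finset (Fin n) → ℝ)
    (hfeas : DualFeasible n T N β lamT μT) :
    ∃ (lamH : Finset (Fin n) × Finset (Fin n) → Fin 3 → ℝ)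
      (μH : Finset (Fin n) → ℝ),
      DualFeasible n T N β lamH μH ∧
      (∀ t ∈ T, vh t = 0 → ∀ j, lamH t j = 0) ∧
      DualObj n T N vh lamH μH = DualObj n T N vh lamT μT := by
  classical
  obtain ⟨hlamnn, hμnn, hcon⟩ := hfeas
  set lamH : Finset (Fin n) × Finset (Fin n) → Fin 3 → ℝ :=
    fun t j => if vh t = 0 then 0 else lamT t j with hlamH
  set μH : Finset (Fin n) → ℝ := fun J =>
    μT J + ∑ t ∈ T.filter (fun t => vh t = 0 ∧ t.1 = J), lamT t 2
         + ∑ t ∈ T.filter (fun t => vh t = 0 ∧ t.2 = J), lamT t 2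
         + ∑ t ∈ T.filter (fun t => vh t = 0 ∧ t.1 ∪ t.2 = J), (lamT t 0 + lamT t 1)
    with hμH
  refine ⟨lamH, μH, ⟨?_, ?_, ?_⟩, ?_, ?_⟩
  · intro t ht j
    simp only [hlamH]
    split
    · exact le_refl 0
    · exact hlamnn t ht j
  · intro J hJ
    have h1 : (0:ℝ) ≤ ∑ t ∈ T.filter (fun t => vh t = 0 ∧ t.1 = J), lamT t 2 :=
      Finset.sum_nonneg fun t ht => hlamnn t (Finset.mem_filter.mp ht).1 2
    have h2 : (0:ℝ) ≤ ∑ t ∈ T.filter (fun t => vh t = 0 ∧ t.2 = J), lamT t 2 :=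
      Finset.sum_nonneg fun t ht => hlamnn t (Finset.mem_filter.mp ht).1 2
    have h3 : (0:ℝ) ≤ ∑ t ∈ T.filter (fun t => vh t = 0 ∧ t.1 ∪ t.2 = J),
        (lamT t 0 + lamT t 1) :=
      Finset.sum_nonneg fun t ht => add_nonneg
        (hlamnn t (Finset.mem_filter.mp ht).1 0) (hlamnn t (Finset.mem_filter.mp ht).1 1)
    have := hμnn J hJ
    simp only [hμH]
    linarith
  · intro J hJ
    have key1 : ∑ t ∈ T.filter (fun t => t.1 = J), (-lamH t 0 + lamH t 2)
        + ∑ t ∈ T.filter (fun t => vh t = 0 ∧ t.1 = J), lamT t 2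
        ≥ ∑ t ∈ T.filter (fun t => t.1 = J), (-lamT t 0 + lamT t 2) := by
      have : T.filter (fun t => vh t = 0 ∧ t.1 = J)
          = (T.filter (fun t => t.1 = J)).filter (fun t => vh t = 0) := by
        rw [Finset.filter_filter]
        apply Finset.filter_congr
        intro t ht
        simp [and_comm]
      rw [this, Finset.sum_filter (fun t => vh t = 0) (fun t => lamT t 2),
        ← Finset.sum_add_distrib]
      apply Finset.sum_le_sum
      intro t ht
      have h0 := hlamnn t (Finset.mem_filter.mp ht).1 0
      simp only [hlamH]
      split <;> simp <;> linarith
    have key2 : ∑ t ∈ T.filter (fun t => t.2 = J), (-lamH t 1 + lamH t 2)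
        + ∑ t ∈ T.filter (fun t => vh t = 0 ∧ t.2 = J), lamT t 2
        ≥ ∑ t ∈ T.filter (fun t => t.2 = J), (-lamT t 1 + lamT t 2) := by
      have : T.filter (fun t => vh t = 0 ∧ t.2 = J)
          = (T.filter (fun t => t.2 = J)).filter (fun t => vh t = 0) := by
        rw [Finset.filter_filter]
        apply Finset.filter_congr
        intro t ht
        simp [and_comm]
      rw [this, Finset.sum_filter (fun t => vh t = 0) (fun t => lamT t 2),
        ← Finset.sum_add_distrib]
      apply Finset.sum_le_sum
      intro t ht
      have h1 := hlamnn t (Finset.mem_filter.mp ht).1 1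
      simp only [hlamH]
      split <;> simp <;> linarith
    have key3 : ∑ t ∈ T.filter (fun t => t.1 ∪ t.2 = J), (lamH t 0 + lamH t 1 - lamH t 2)
        + ∑ t ∈ T.filter (fun t => vh t = 0 ∧ t.1 ∪ t.2 = J), (lamT t 0 + lamT t 1)
        ≥ ∑ t ∈ T.filter (fun t => t.1 ∪ t.2 = J), (lamT t 0 + lamT t 1 - lamT t 2) := by
      have : T.filter (fun t => vh t = 0 ∧ t.1 ∪ t.2 = J)
          = (T.filter (fun t => t.1 ∪ t.2 = J)).filter (fun t => vh t = 0) := by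
        rw [Finset.filter_filter]
        apply Finset.filter_congr
        intro t ht
        simp [and_comm]
      rw [this, Finset.sum_filter (fun t => vh t = 0) (fun t => lamT t 0 + lamT t 1),
        ← Finset.sum_add_distrib]
      apply Finset.sum_le_sum
      intro t ht
      have h2 := hlamnn t (Finset.mem_filter.mp ht).1 2
      simp only [hlamH]
      split <;> simp <;> linarith
    have := hcon J hJ
    simp only [hμH]
    linarith
  · intro t ht h0 j
    simp [hlamH, h0]
  · unfold DualObj
    have hsum1 : ∑ J ∈ N, ∑ t ∈ T.filter (fun t => vh t = 0 ∧ t.1 = J), lamT t 2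
        = ∑ t ∈ T.filter (fun t => vh t = 0), lamT t 2 := by
      have : ∀ J ∈ N, T.filter (fun t => vh t = 0 ∧ t.1 = J)
          = (T.filter (fun t => vh t = 0)).filter (fun t => t.1 = J) := fun J _ => by
        rw [Finset.filter_filter]
      rw [Finset.sum_congr rfl fun J hJ => by rw [this J hJ]]
      exact Finset.sum_fiberwise_of_maps_to
        (fun t ht => (hTN t (Finset.mem_filter.mp ht).1).1) _
    have hsum2 : ∑ J ∈ N, ∑ t ∈ T.filter (fun t => vh t = 0 ∧ t.2 = J), lamT t 2
        = ∑ t ∈ T.filter (fun t => vh t = 0), lamT t 2 := by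
      have : ∀ J ∈ N, T.filter (fun t => vh t = 0 ∧ t.2 = J)
          = (T.filter (fun t => vh t = 0)).filter (fun t => t.2 = J) := fun J _ => by
        rw [Finset.filter_filter]
      rw [Finset.sum_congr rfl fun J hJ => by rw [this J hJ]]
      exact Finset.sum_fiberwise_of_maps_to
        (fun t ht => (hTN t (Finset.mem_filter.mp ht).1).2.1) _
    have hsum3 : ∑ J ∈ N, ∑ t ∈ T.filter (fun t => vh t = 0 ∧ t.1 ∪ t.2 = J),
          (lamT t 0 + lamT t 1)
        = ∑ t ∈ T.filter (fun t => vh t = 0), (lamT t 0 + lamT t 1) := by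
      have : ∀ J ∈ N, T.filter (fun t => vh t = 0 ∧ t.1 ∪ t.2 = J)
          = (T.filter (fun t => vh t = 0)).filter (fun t => t.1 ∪ t.2 = J) := fun J _ => by
        rw [Finset.filter_filter]
      rw [Finset.sum_congr rfl fun J hJ => by rw [this J hJ]]
      exact Finset.sum_fiberwise_of_maps_to
        (fun t ht => (hTN t (Finset.mem_filter.mp ht).1).2.2) _
    have hμsum : ∑ J ∈ N, μH J = ∑ J ∈ N, μT J
        + ∑ t ∈ T.filter (fun t => vh t = 0),
            (lamT t 2 + lamT t 2 + (lamT t 0 + lamT t 1)) := by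
      simp only [hμH]
      rw [Finset.sum_add_distrib, Finset.sum_add_distrib, Finset.sum_add_distrib,
        hsum1, hsum2, hsum3]
      simp only [Finset.sum_add_distrib]
      ring
    have hlamsum : ∑ t ∈ T, ((1 - vh t) * (lamH t 0 + lamH t 1) + (2 - vh t) * lamH t 2)
        = ∑ t ∈ T, ((1 - vh t) * (lamT t 0 + lamT t 1) + (2 - vh t) * lamT t 2)
          - ∑ t ∈ T.filter (fun t => vh t = 0),
              (lamT t 2 + lamT t 2 + (lamT t 0 + lamT t 1)) := by
      rw [eq_sub_iff_add_eq, Finset.sum_filter, ← Finset.sum_add_distrib]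
      apply Finset.sum_congr rfl
      intro t ht
      simp only [hlamH]
      split
      · rename_i h
        simp [h]; ring
      · simp
    rw [hμsum, hlamsum]
    ring
end

section
/- Fix v̂ : 𝒯 → {0,1}. Suppose (λ,μ) is dual feasible, λ_t = (0,0,0) for every t ∈ 𝒯 with v̂_t = 0, and Obj(λ,μ) ≥ −η. Then for every J ∈ 𝒩: ∑_{t∈𝒯: tail1(t)=J} λ_{t,1} + ∑_{t∈𝒯: tail2(t)=J} λ_{t,2} ≤ β_J + η + ∑_{t∈𝒯: head(t)=J} (λ_{t,1} + λ_{t,2}). -/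
open Finset

theorem stmt_4 (n : ℕ)
    (T : Finset (Finset (Fin n) × Finset (Fin n)))
    (hT : ∀ t ∈ T, t.1.Nonempty ∧ t.2.Nonempty ∧ Disjoint t.1 t.2)
    (N : Finset (Finset (Fin n)))
    (hNne : ∀ J ∈ N, J.Nonempty)
    (hTN : ∀ t ∈ T, t.1 ∈ N ∧ t.2 ∈ N ∧ t.1 ∪ t.2 ∈ N)
    (β : Finset (Fin n) → ℝ)
    (η : ℝ) (hη : η = -∑ J ∈ N, min 0 (β J))
    (vh : Finset (Fin n) × Finset (Fin n) → ℝ)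
    (hv : ∀ t ∈ T, vh t = 0 ∨ vh t = 1)
    (lam : Finset (Fin n) × Finset (Fin n) → Fin 3 → ℝ)
    (μ : Finset (Fin n) → ℝ)
    (hfeas : DualFeasible n T N β lam μ)
    (hzero : ∀ t ∈ T, vh t = 0 → ∀ j, lam t j = 0)
    (hobj : DualObj n T N vh lam μ ≥ -η) :
    ∀ J ∈ N,
      ∑ t ∈ T.filter (fun t => t.1 = J), lam t 0
        + ∑ t ∈ T.filter (fun t => t.2 = J), lam t 1
        ≤ β J + η + ∑ t ∈ T.filter (fun t => t.1 ∪ t.2 = J), (lam t 0 + lam t 1) := by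
  obtain ⟨hlam, hμ, hineq⟩ := hfeas
  intro J hJ
  have hsum_obj : ∑ t ∈ T, ((1 - vh t) * (lam t 0 + lam t 1) + (2 - vh t) * lam t 2)
      + ∑ J ∈ N, μ J ≤ η := by
    have := hobj
    simp only [DualObj] at this
    linarith
  have hterm : ∀ t ∈ T, lam t 2 ≤ (1 - vh t) * (lam t 0 + lam t 1) + (2 - vh t) * lam t 2 := by
    intro t ht
    have h0 := hlam t ht 0
    have h1 := hlam t ht 1
    have h2 := hlam t ht 2
    rcases hv t ht with h | h <;> rw [h] <;> nlinarith
  have hdisj : Disjoint (T.filter (fun t => t.1 = J)) (T.filter (fun t => t.2 = J)) := by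
    rw [Finset.disjoint_left]
    intro t ht1 ht2
    simp only [Finset.mem_filter] at ht1 ht2
    obtain ⟨hne1, hne2, hd⟩ := hT t ht1.1
    rw [ht1.2, ← ht2.2] at hd
    exact hne2.ne_empty (by simpa using disjoint_self.mp hd.symm)
  have hsub : T.filter (fun t => t.1 = J) ∪ T.filter (fun t => t.2 = J) ⊆ T :=
    Finset.union_subset (Finset.filter_subset _ _) (Finset.filter_subset _ _)
  have h3 : ∑ t ∈ T.filter (fun t => t.1 = J), lam t 2
      + ∑ t ∈ T.filter (fun t => t.2 = J), lam t 2 ≤ ∑ t ∈ T, lam t 2 := by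
    rw [← Finset.sum_union hdisj]
    exact Finset.sum_le_sum_of_subset_of_nonneg hsub (fun t ht _ => hlam t ht 2)
  have h4 : ∑ t ∈ T, lam t 2
      ≤ ∑ t ∈ T, ((1 - vh t) * (lam t 0 + lam t 1) + (2 - vh t) * lam t 2) :=
    Finset.sum_le_sum hterm
  have h5 : μ J ≤ ∑ J ∈ N, μ J := Finset.single_le_sum (fun K hK => hμ K hK) hJ
  have h6 := hineq J hJ
  have h7 : 0 ≤ ∑ t ∈ T.filter (fun t => t.1 ∪ t.2 = J), lam t 2 :=
    Finset.sum_nonneg fun t ht => hlam t (Finset.mem_filter.mp ht).1 2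
  rw [ge_iff_le] at h6
  simp only [Finset.sum_add_distrib, Finset.sum_sub_distrib, Finset.sum_neg_distrib] at h6 ⊢
  linarith
end

section
/- There exist finite constants M_{t,j} ∈ [0,∞) for every t ∈ 𝒯 and j ∈ {1,2,3}, and M_J ∈ [0,∞) for every J ∈ 𝒩, depending only on (n, 𝒯, 𝒩, β) and not on v̂, such that: for every v̂ : 𝒯 → {0,1} and every dual feasible pair (λ,μ) satisfying λ_t = (0,0,0) whenever v̂_t = 0 and Obj(λ,μ) ≥ −η, one has λ_{t,j} ≤ M_{t,j} for all t ∈ 𝒯, j ∈ {1,2,3}, and μ_J ≤ M_J for all J ∈ 𝒩. -/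
open Finset

/-- Recursive bound. -/
def Bnd (C a : ℝ) : ℕ → ℝ
  | 0 => C
  | k + 1 => C + a * Bnd C a k

lemma le_Bnd (C a : ℝ) (hC : 0 ≤ C) (ha : 0 ≤ a) : ∀ k, C ≤ Bnd C a k
  | 0 => le_refl C
  | k + 1 => by
      have h := le_Bnd C a hC ha k
      simp only [Bnd]
      nlinarith

theorem stmt_5 (n : ℕ)
    (T : Finset (Finset (Fin n) × Finset (Fin n)))
    (hT : ∀ t ∈ T, t.1.Nonempty ∧ t.2.Nonempty ∧ Disjoint t.1 t.2)
    (N : Finset (Finset (Fin n)))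
    (hNne : ∀ J ∈ N, J.Nonempty)
    (hTN : ∀ t ∈ T, t.1 ∈ N ∧ t.2 ∈ N ∧ t.1 ∪ t.2 ∈ N)
    (β : Finset (Fin n) → ℝ)
    (η : ℝ) (hη : η = -∑ J ∈ N, min 0 (β J)) :
    ∃ (M : Finset (Fin n) × Finset (Fin n) → Fin 3 → ℝ)
      (M' : Finset (Fin n) → ℝ),
      (∀ t ∈ T, ∀ j, 0 ≤ M t j) ∧ (∀ J ∈ N, 0 ≤ M' J) ∧
      ∀ vh : Finset (Fin n) × Finset (Fin n) → ℝ,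
        (∀ t ∈ T, vh t = 0 ∨ vh t = 1) →
        ∀ (lam : Finset (Fin n) × Finset (Fin n) → Fin 3 → ℝ)
          (μ : Finset (Fin n) → ℝ),
          DualFeasible n T N β lam μ →
          (∀ t ∈ T, vh t = 0 → ∀ j, lam t j = 0) →
          DualObj n T N vh lam μ ≥ -η →
          (∀ t ∈ T, ∀ j, lam t j ≤ M t j) ∧ (∀ J ∈ N, μ J ≤ M' J) := by
  classical
  have hη0 : 0 ≤ η := by
    rw [hη]
    have h : ∑ J ∈ N, min 0 (β J) ≤ 0 :=
      Finset.sum_nonpos fun J _ => min_le_left _ _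
    linarith
  set Cβ : ℝ := ∑ J ∈ N, |β J| with hCβdef
  have hCβ0 : 0 ≤ Cβ := Finset.sum_nonneg fun J _ => abs_nonneg _
  set C : ℝ := Cβ + η + 2 * T.card * η with hCdef
  have hC0 : 0 ≤ C := by positivity
  set a : ℝ := 2 * T.card + 1 with hadef
  have ha0 : (0 : ℝ) ≤ a := by positivity
  have hBnn : ∀ k, 0 ≤ Bnd C a k := fun k => le_trans hC0 (le_Bnd C a hC0 ha0 k)
  refine ⟨fun _ _ => Bnd C a n, fun _ => η,
    fun t _ j => hBnn n, fun J _ => hη0, ?_⟩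
  intro vh hvh lam μ hfeas hzero hobj
  obtain ⟨hlamnn, hμnn, hcon⟩ := hfeas
  -- objective simplification
  have hsum : ∑ t ∈ T, lam t 2 + ∑ J ∈ N, μ J ≤ η := by
    have heq : ∑ t ∈ T, ((1 - vh t) * (lam t 0 + lam t 1) + (2 - vh t) * lam t 2)
        = ∑ t ∈ T, lam t 2 := by
      apply Finset.sum_congr rfl
      intro t ht
      rcases hvh t ht with h0 | h1
      · simp [hzero t ht h0, h0]
      · rw [h1]; ring
    have hO := hobj
    unfold DualObj at hO
    rw [heq] at hO
    linarith
  have hlam2 : ∀ t ∈ T, lam t 2 ≤ η := by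
    intro t ht
    have h1 : lam t 2 ≤ ∑ t ∈ T, lam t 2 :=
      Finset.single_le_sum (fun s hs => hlamnn s hs 2) ht
    have h2 : 0 ≤ ∑ J ∈ N, μ J := Finset.sum_nonneg fun J hJ => hμnn J hJ
    linarith
  have hμb : ∀ J ∈ N, μ J ≤ η := by
    intro J hJ
    have h1 : μ J ≤ ∑ J ∈ N, μ J :=
      Finset.single_le_sum (fun s hs => hμnn s hs) hJ
    have h2 : 0 ≤ ∑ t ∈ T, lam t 2 := Finset.sum_nonneg fun t ht => hlamnn t ht 2
    linarith
  -- key per-constraint bound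
  have key : ∀ J ∈ N, ∀ Bk : ℝ, 0 ≤ Bk →
      (∀ t' ∈ T, t'.1 ∪ t'.2 = J → lam t' 0 ≤ Bk ∧ lam t' 1 ≤ Bk) →
      (∑ t' ∈ T.filter (fun t' => t'.1 = J), lam t' 0)
        + (∑ t' ∈ T.filter (fun t' => t'.2 = J), lam t' 1)
        ≤ C + 2 * T.card * Bk := by
    intro J hJ Bk hBk hhead
    have hc := hcon J hJ
    have hβ : β J ≤ Cβ := by
      have h1 : |β J| ≤ Cβ :=
        Finset.single_le_sum (f := fun J => |β J|) (fun s _ => abs_nonneg _) hJ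
      exact le_trans (le_abs_self _) h1
    have hf1 : ∑ t' ∈ T.filter (fun t' => t'.1 = J), lam t' 2 ≤ T.card * η := by
      calc ∑ t' ∈ T.filter (fun t' => t'.1 = J), lam t' 2
          ≤ (T.filter (fun t' => t'.1 = J)).card • η :=
            Finset.sum_le_card_nsmul _ _ _
              (fun x hx => hlam2 x (Finset.mem_filter.1 hx).1)
        _ = ((T.filter (fun t' => t'.1 = J)).card : ℝ) * η := by
            rw [nsmul_eq_mul]
        _ ≤ T.card * η := by
            apply mul_le_mul_of_nonneg_right _ hη0
            exact_mod_cast Finset.card_filter_le _ _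
    have hf2 : ∑ t' ∈ T.filter (fun t' => t'.2 = J), lam t' 2 ≤ T.card * η := by
      calc ∑ t' ∈ T.filter (fun t' => t'.2 = J), lam t' 2
          ≤ (T.filter (fun t' => t'.2 = J)).card • η :=
            Finset.sum_le_card_nsmul _ _ _
              (fun x hx => hlam2 x (Finset.mem_filter.1 hx).1)
        _ = ((T.filter (fun t' => t'.2 = J)).card : ℝ) * η := by
            rw [nsmul_eq_mul]
        _ ≤ T.card * η := by
            apply mul_le_mul_of_nonneg_right _ hη0
            exact_mod_cast Finset.card_filter_le _ _
    have hf3 : ∑ t' ∈ T.filter (fun t' => t'.1 ∪ t'.2 = J),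
        (lam t' 0 + lam t' 1 - lam t' 2) ≤ T.card * (2 * Bk) := by
      calc ∑ t' ∈ T.filter (fun t' => t'.1 ∪ t'.2 = J),
            (lam t' 0 + lam t' 1 - lam t' 2)
          ≤ (T.filter (fun t' => t'.1 ∪ t'.2 = J)).card • (2 * Bk) := by
            apply Finset.sum_le_card_nsmul
            intro x hx
            obtain ⟨hxT, hxJ⟩ := Finset.mem_filter.1 hx
            have h01 := hhead x hxT hxJ
            have h2 := hlamnn x hxT 2
            linarith [h01.1, h01.2]
        _ = ((T.filter (fun t' => t'.1 ∪ t'.2 = J)).card : ℝ) * (2 * Bk) := by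
            rw [nsmul_eq_mul]
        _ ≤ T.card * (2 * Bk) := by
            apply mul_le_mul_of_nonneg_right _ (by positivity)
            exact_mod_cast Finset.card_filter_le _ _
    have hs1 : ∑ t' ∈ T.filter (fun t' => t'.1 = J), (-lam t' 0 + lam t' 2)
        = -(∑ t' ∈ T.filter (fun t' => t'.1 = J), lam t' 0)
          + ∑ t' ∈ T.filter (fun t' => t'.1 = J), lam t' 2 := by
      rw [Finset.sum_add_distrib, Finset.sum_neg_distrib]
    have hs2 : ∑ t' ∈ T.filter (fun t' => t'.2 = J), (-lam t' 1 + lam t' 2)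
        = -(∑ t' ∈ T.filter (fun t' => t'.2 = J), lam t' 1)
          + ∑ t' ∈ T.filter (fun t' => t'.2 = J), lam t' 2 := by
      rw [Finset.sum_add_distrib, Finset.sum_neg_distrib]
    have hμJ := hμb J hJ
    rw [hs1, hs2] at hc
    rw [hCdef]
    linarith
  -- main induction
  have main : ∀ k, ∀ t ∈ T,
      (t.1.card ≤ k → lam t 0 ≤ Bnd C a k) ∧
      (t.2.card ≤ k → lam t 1 ≤ Bnd C a k) := by
    intro k
    induction k with
    | zero =>
      intro t ht
      constructor
      · intro hcard
        exact absurd (Finset.card_eq_zero.1 (Nat.le_zero.1 hcard))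
          (hT t ht).1.ne_empty
      · intro hcard
        exact absurd (Finset.card_eq_zero.1 (Nat.le_zero.1 hcard))
          (hT t ht).2.1.ne_empty
    | succ k ih =>
      intro t ht
      have headlt : ∀ J : Finset (Fin n), J.card ≤ k + 1 →
          ∀ t' ∈ T, t'.1 ∪ t'.2 = J → lam t' 0 ≤ Bnd C a k ∧ lam t' 1 ≤ Bnd C a k := by
        intro J hJcard t' ht' hu
        obtain ⟨h1ne, h2ne, hd⟩ := hT t' ht'
        have hsub1 : t'.1 ⊆ J := hu ▸ Finset.subset_union_left
        have hsub2 : t'.2 ⊆ J := hu ▸ Finset.subset_union_right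
        have hss1 : t'.1 ⊂ J := by
          obtain ⟨x, hx⟩ := h2ne
          exact (Finset.ssubset_iff_of_subset hsub1).2
            ⟨x, hsub2 hx, Finset.disjoint_right.1 hd hx⟩
        have hss2 : t'.2 ⊂ J := by
          obtain ⟨x, hx⟩ := h1ne
          exact (Finset.ssubset_iff_of_subset hsub2).2
            ⟨x, hsub1 hx, Finset.disjoint_left.1 hd hx⟩
        have hc1 : t'.1.card ≤ k := by
          have := Finset.card_lt_card hss1; omega
        have hc2 : t'.2.card ≤ k := by
          have := Finset.card_lt_card hss2; omega
        exact ⟨(ih t' ht').1 hc1, (ih t' ht').2 hc2⟩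
      have hBk := hBnn k
      have hBstep : Bnd C a (k + 1) = C + a * Bnd C a k := rfl
      constructor
      · intro hcard
        have hJN := (hTN t ht).1
        have hkey := key t.1 hJN (Bnd C a k) hBk (headlt t.1 hcard)
        have hmem : t ∈ T.filter (fun t' => t'.1 = t.1) :=
          Finset.mem_filter.2 ⟨ht, rfl⟩
        have h1 : lam t 0 ≤ ∑ t' ∈ T.filter (fun t' => t'.1 = t.1), lam t' 0 :=
          Finset.single_le_sum
            (fun s hs => hlamnn s (Finset.mem_filter.1 hs).1 0) hmem
        have h2 : 0 ≤ ∑ t' ∈ T.filter (fun t' => t'.2 = t.1), lam t' 1 :=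
          Finset.sum_nonneg fun s hs => hlamnn s (Finset.mem_filter.1 hs).1 1
        rw [hBstep, hadef]
        nlinarith
      · intro hcard
        have hJN := (hTN t ht).2.1
        have hkey := key t.2 hJN (Bnd C a k) hBk (headlt t.2 hcard)
        have hmem : t ∈ T.filter (fun t' => t'.2 = t.2) :=
          Finset.mem_filter.2 ⟨ht, rfl⟩
        have h1 : lam t 1 ≤ ∑ t' ∈ T.filter (fun t' => t'.2 = t.2), lam t' 1 :=
          Finset.single_le_sum
            (fun s hs => hlamnn s (Finset.mem_filter.1 hs).1 1) hmem
        have h2 : 0 ≤ ∑ t' ∈ T.filter (fun t' => t'.1 = t.2), lam t' 0 :=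
          Finset.sum_nonneg fun s hs => hlamnn s (Finset.mem_filter.1 hs).1 0
        rw [hBstep, hadef]
        nlinarith
  refine ⟨?_, fun J hJ => hμb J hJ⟩
  intro t ht j
  have hcard1 : t.1.card ≤ n := le_trans (Finset.card_le_univ _) (by simp)
  have hcard2 : t.2.card ≤ n := le_trans (Finset.card_le_univ _) (by simp)
  fin_cases j
  · exact (main n t ht).1 hcard1
  · exact (main n t ht).2 hcard2
  · exact le_trans (hlam2 t ht) (le_trans (by rw [hCdef]; nlinarith) (le_Bnd C a hC0 ha0 n))
end

section
/- Assume every v ∈ V has at least one neighbor. Let v₀ ∈ V be such that N(v₀) ≠ ∅ and every u ∈ N(v₀) satisfies N(u) = {v₀} (the only vertex of V adjacent to u is v₀). Then every minimum-cardinality D ⊆ U dominating V satisfies |D ∩ N(v₀)| = 1, and for every u₀ ∈ N(v₀) and every minimum-cardinality dominating set D, the set (D \ N(v₀)) ∪ {u₀} is also a minimum-cardinality set dominating V. (Rule 1 of the reduction rules.) -/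
open Finset

/-- `D` dominates `V` in the bipartite graph with edge set `E`. -/
def Dominates {α : Type*} [DecidableEq α] (E : Finset (α × α)) (D V : Finset α) : Prop :=
  ∀ v ∈ V, ∃ u ∈ D, (u, v) ∈ E

theorem stmt_8 {α : Type*} [DecidableEq α]
    (U V : Finset α) (hUV : Disjoint U V)
    (E : Finset (α × α)) (hE : E ⊆ U ×ˢ V)
    (hcov : ∀ v ∈ V, ∃ u ∈ U, (u, v) ∈ E)
    (v₀ : α) (hv₀ : v₀ ∈ V)
    (hne : (U.filter (fun u => (u, v₀) ∈ E)).Nonempty)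
    (honly : ∀ u ∈ U.filter (fun u => (u, v₀) ∈ E),
      V.filter (fun v => (u, v) ∈ E) = {v₀}) :
    ∀ D ⊆ U, Dominates E D V →
      (∀ D' ⊆ U, Dominates E D' V → D.card ≤ D'.card) →
      (D ∩ U.filter (fun u => (u, v₀) ∈ E)).card = 1 ∧
      ∀ u₀ ∈ U.filter (fun u => (u, v₀) ∈ E),
        ((D \ U.filter (fun u => (u, v₀) ∈ E)) ∪ {u₀}) ⊆ U ∧
        Dominates E ((D \ U.filter (fun u => (u, v₀) ∈ E)) ∪ {u₀}) V ∧
        ∀ D' ⊆ U, Dominates E D' V →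
          ((D \ U.filter (fun u => (u, v₀) ∈ E)) ∪ {u₀}).card ≤ D'.card := by
  intro D hDU hDdom hDmin
  set N := U.filter (fun u => (u, v₀) ∈ E) with hN
  have hdom : ∀ u ∈ N, Dominates E ((D \ N) ∪ {u}) V := by
    intro u hu v hv
    obtain ⟨w, hwD, hwE⟩ := hDdom v hv
    by_cases hwN : w ∈ N
    · have hveq : v = v₀ := by
        have hH := honly w hwN
        have hvmem : v ∈ V.filter (fun v => (w, v) ∈ E) := mem_filter.2 ⟨hv, hwE⟩
        rw [hH] at hvmem
        exact mem_singleton.1 hvmem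
      exact ⟨u, mem_union_right _ (mem_singleton_self u), hveq ▸ (mem_filter.1 hu).2⟩
    · exact ⟨w, mem_union_left _ (mem_sdiff.2 ⟨hwD, hwN⟩), hwE⟩
  have hsub : ∀ u ∈ N, (D \ N) ∪ {u} ⊆ U := by
    intro u hu
    apply union_subset (sdiff_subset.trans hDU)
    simpa using (mem_filter.1 hu).1
  obtain ⟨u₁, hu₁D, hu₁E⟩ := hDdom v₀ hv₀
  have hu₁N : u₁ ∈ N := mem_filter.2 ⟨hDU hu₁D, hu₁E⟩
  have hcard1 : (D ∩ N).card = 1 := by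
    have hge : 1 ≤ (D ∩ N).card := card_pos.2 ⟨u₁, mem_inter.2 ⟨hu₁D, hu₁N⟩⟩
    by_contra h
    have hgt : 1 < (D ∩ N).card := lt_of_le_of_ne hge (Ne.symm h)
    obtain ⟨a, ha, b, hb, hab⟩ := one_lt_card.1 hgt
    have haD := (mem_inter.1 ha).1
    have haN := (mem_inter.1 ha).2
    have hbD := (mem_inter.1 hb).1
    have hbN := (mem_inter.1 hb).2
    have hsubD : (D \ N) ∪ {a} ⊆ D := by
      apply union_subset sdiff_subset
      simpa using haD
    have hbnot : b ∉ (D \ N) ∪ {a} := by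
      simp only [mem_union, mem_sdiff, mem_singleton]
      push_neg
      exact ⟨fun _ => hbN, fun h => hab h.symm⟩
    have hlt : ((D \ N) ∪ {a}).card < D.card :=
      card_lt_card ((ssubset_iff_of_subset hsubD).2 ⟨b, hbD, hbnot⟩)
    exact absurd (hDmin _ (hsub a haN) (hdom a haN)) (not_le.2 hlt)
  refine ⟨hcard1, ?_⟩
  intro u₀ hu₀
  refine ⟨hsub u₀ hu₀, hdom u₀ hu₀, ?_⟩
  intro D' hD' hD'dom
  have hDpos : 1 ≤ D.card := card_pos.2 ⟨u₁, hu₁D⟩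
  have hsd : (D \ N).card = D.card - 1 := by
    have : D \ N = D \ (D ∩ N) := by
      ext x; simp [mem_sdiff, mem_inter]
    rw [this, card_sdiff_of_subset inter_subset_left, hcard1]
  have hle : ((D \ N) ∪ {u₀}).card ≤ D.card := by
    calc ((D \ N) ∪ {u₀}).card ≤ (D \ N).card + 1 := by
          simpa using card_union_le (D \ N) {u₀}
      _ = D.card - 1 + 1 := by rw [hsd]
      _ = D.card := Nat.sub_add_cancel hDpos
  exact hle.trans (hDmin D' hD' hD'dom)
end

section
/- Suppose D ⊆ U dominates V, u ∈ D satisfies |N(u)| ≤ 1, and every v ∈ V has at least one neighbor u' ∈ U with |N(u')| ≥ 2. Then there exists D' ⊆ U dominating V with |D'| ≤ |D| and u ∉ D'. (Rule 2 of the reduction rules: degree-1 dominators can be eliminated.) -/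
open Finset

theorem stmt_9 {α : Type*} [DecidableEq α]
    (U V : Finset α) (hUV : Disjoint U V)
    (E : Finset (α × α)) (hE : E ⊆ U ×ˢ V)
    (D : Finset α) (hDU : D ⊆ U) (hdom : Dominates E D V)
    (u : α) (hu : u ∈ D)
    (hdeg : (V.filter (fun v => (u, v) ∈ E)).card ≤ 1)
    (hbig : ∀ v ∈ V, ∃ u' ∈ U, (u', v) ∈ E ∧
      2 ≤ (V.filter (fun w => (u', w) ∈ E)).card) :
    ∃ D' ⊆ U, Dominates E D' V ∧ D'.card ≤ D.card ∧ u ∉ D' := by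
  classical
  set Nu := V.filter (fun v => (u, v) ∈ E) with hNu
  rcases Nat.lt_or_ge Nu.card 1 with h0 | h1
  · -- N(u) empty: just remove u
    refine ⟨D.erase u, (erase_subset u D).trans hDU, ?_, (card_erase_le), notMem_erase u D⟩
    intro w hw
    obtain ⟨d, hd, hdw⟩ := hdom w hw
    refine ⟨d, mem_erase.2 ⟨?_, hd⟩, hdw⟩
    rintro rfl
    have : w ∈ Nu := mem_filter.2 ⟨hw, hdw⟩
    exact absurd (card_pos.2 ⟨w, this⟩) (by omega)
  · -- N(u) = {v}
    have hcard : Nu.card = 1 := le_antisymm hdeg h1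
    obtain ⟨v, hv⟩ := card_eq_one.1 hcard
    have hvV : v ∈ V := (mem_filter.1 (hv ▸ mem_singleton_self v)).1
    obtain ⟨u', hu'U, hu'v, hu'deg⟩ := hbig v hvV
    have hne : u' ≠ u := by
      rintro rfl
      rw [← hNu] at hu'deg
      omega
    refine ⟨insert u' (D.erase u), ?_, ?_, ?_, ?_⟩
    · intro x hx
      rcases mem_insert.1 hx with rfl | hx
      · exact hu'U
      · exact hDU (erase_subset u D hx)
    · intro w hw
      obtain ⟨d, hd, hdw⟩ := hdom w hw
      by_cases hdu : d = u
      · subst hdu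
        have : w ∈ Nu := mem_filter.2 ⟨hw, hdw⟩
        rw [hv, mem_singleton] at this
        subst this
        exact ⟨u', mem_insert_self _ _, hu'v⟩
      · exact ⟨d, mem_insert_of_mem (mem_erase.2 ⟨hdu, hd⟩), hdw⟩
    · calc (insert u' (D.erase u)).card ≤ (D.erase u).card + 1 := card_insert_le _ _
        _ = D.card - 1 + 1 := by rw [card_erase_of_mem hu]
        _ ≤ D.card := by
            have : 1 ≤ D.card := card_pos.2 ⟨u, hu⟩
            omega
    · intro h
      rcases mem_insert.1 h with h | h
      · exact hne h.symm
      · exact notMem_erase u D h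
end

section
/- Suppose the bipartite graph (U, V, E) is K_{2,2}-free, i.e., no two distinct u, u' ∈ U have two distinct common neighbors in V. Let u ∈ U and let D ⊆ U \ {u} be such that every v ∈ N(u) has a neighbor in D. Then |D| ≥ |N(u)|. (Property 4 of the kernel: if u is not selected, a distinct dominator is needed for each neighbor of u.) -/
open Finset

/-- The bipartite graph `(U, V, E)` is `K_{2,2}`-free: no two distinct vertices of `U`
have two distinct common neighbors in `V`. -/
def K22Free {α : Type*} [DecidableEq α] (U V : Finset α) (E : Finset (α × α)) : Prop :=
  ∀ u ∈ U, ∀ u' ∈ U, u ≠ u' → ∀ v ∈ V, ∀ v' ∈ V, v ≠ v' →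
    ¬((u, v) ∈ E ∧ (u, v') ∈ E ∧ (u', v) ∈ E ∧ (u', v') ∈ E)

/-! In a `K_{2,2}`-free graph a vertex `d ≠ u` is adjacent to at most one neighbour of `u`, so
each vertex of `D` dominates at most one vertex of `N(u)`; double counting the domination
relation then gives `|N(u)| ≤ |D|`. -/

namespace K22Free

variable {α : Type*} [DecidableEq α] {U V : Finset α} {E : Finset (α × α)}

theorem eq_of_mem_common_neighbors (hK : K22Free U V E) {u d : α} (hu : u ∈ U) (hd : d ∈ U)
    (hud : u ≠ d) {v v' : α} (hv : v ∈ V) (hv' : v' ∈ V) (huv : (u, v) ∈ E)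
    (huv' : (u, v') ∈ E) (hdv : (d, v) ∈ E) (hdv' : (d, v') ∈ E) : v = v' := by
  by_contra hne
  exact hK u hu d hd hud v hv v' hv' hne ⟨huv, huv', hdv, hdv'⟩

theorem card_le_of_dominates {u : α} (hK : K22Free U V E) (hu : u ∈ U) {D W : Finset α}
    (hDU : D ⊆ U) (huD : u ∉ D) (hW : W ⊆ V.filter (fun v => (u, v) ∈ E))
    (hdom : Dominates E D W) : W.card ≤ D.card := by
  refine card_le_card_of_forall_subsingleton (fun v d => (d, v) ∈ E) hdom fun d hd => ?_
  rintro v ⟨hvW, hdv⟩ v' ⟨hv'W, hdv'⟩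
  obtain ⟨hv, huv⟩ := mem_filter.mp (hW hvW)
  obtain ⟨hv', huv'⟩ := mem_filter.mp (hW hv'W)
  exact hK.eq_of_mem_common_neighbors hu (hDU hd) (ne_of_mem_of_not_mem hd huD).symm
    hv hv' huv huv' hdv hdv'

end K22Free

theorem stmt_12_general {α : Type*} [DecidableEq α]
    (U V : Finset α)
    (E : Finset (α × α))
    (hK : K22Free U V E)
    (u : α) (hu : u ∈ U)
    (D : Finset α) (hDU : D ⊆ U) (huD : u ∉ D)
    (hdom : ∀ v ∈ V.filter (fun v => (u, v) ∈ E), ∃ d ∈ D, (d, v) ∈ E) :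
    (V.filter (fun v => (u, v) ∈ E)).card ≤ D.card :=
  hK.card_le_of_dominates hu hDU huD subset_rfl hdom

theorem stmt_12 {α : Type*} [DecidableEq α]
    (U V : Finset α) (hUV : Disjoint U V)
    (E : Finset (α × α)) (hE : E ⊆ U ×ˢ V)
    (hK : K22Free U V E)
    (u : α) (hu : u ∈ U)
    (D : Finset α) (hDU : D ⊆ U) (huD : u ∉ D)
    (hdom : ∀ v ∈ V.filter (fun v => (u, v) ∈ E), ∃ d ∈ D, (d, v) ∈ E) :
    (V.filter (fun v => (u, v) ∈ E)).card ≤ D.card :=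
  stmt_12_general U V E hK u hu D hDU huD hdom
end

section
/- Let k ∈ ℕ. Suppose the bipartite graph (U, V, E) is K_{2,2}-free, D ⊆ U dominates V, |D| ≤ k, and some u ∈ U satisfies |N(u)| ≥ k + 1. Then u ∈ D. (Rule 6: any vertex of degree at least k+1 belongs to every dominating set of size at most k.) -/
open Finset

/-! If `u ∉ D`, sending each neighbor of `u` to a vertex of `D` dominating it is injective,
since two neighbors of `u` sharing a dominator `d ≠ u` would span a `K_{2,2}` with `u` and `d`.
Hence `deg u ≤ |D| ≤ k`. -/

theorem K22Free.subsingleton_commonNeighbors {α : Type*} [DecidableEq α]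
    {U V : Finset α} {E : Finset (α × α)} (hK : K22Free U V E)
    {u u' : α} (hu : u ∈ U) (hu' : u' ∈ U) (hne : u ≠ u') :
    ({v ∈ V | (u, v) ∈ E ∧ (u', v) ∈ E} : Set α).Subsingleton := by
  rintro v ⟨hv, huv, hu'v⟩ v' ⟨hv', huv', hu'v'⟩
  by_contra hvv'
  exact hK u hu u' hu' hne v hv v' hv' hvv' ⟨huv, huv', hu'v, hu'v'⟩

theorem K22Free.card_neighbors_le_card_of_dominates {α : Type*} [DecidableEq α]
    {U V : Finset α} {E : Finset (α × α)} (hK : K22Free U V E)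
    {D : Finset α} (hDU : D ⊆ U) (hdom : Dominates E D V)
    {u : α} (hu : u ∈ U) (huD : u ∉ D) :
    (V.filter (fun v => (u, v) ∈ E)).card ≤ D.card := by
  refine card_le_card_of_forall_subsingleton (fun v d => (d, v) ∈ E)
    (fun v hv => hdom v (mem_filter.mp hv).1) fun d hd => ?_
  have hud : u ≠ d := fun h => huD (h ▸ hd)
  refine (hK.subsingleton_commonNeighbors hu (hDU hd) hud).anti ?_
  rintro v ⟨hv, hdv⟩
  exact ⟨(mem_filter.mp hv).1, (mem_filter.mp hv).2, hdv⟩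

theorem stmt_13_general {α : Type*} [DecidableEq α] (k : ℕ)
    (U V : Finset α)
    (E : Finset (α × α))
    (hK : K22Free U V E)
    (D : Finset α) (hDU : D ⊆ U) (hdom : Dominates E D V) (hDk : D.card ≤ k)
    (u : α) (hu : u ∈ U)
    (hdeg : k + 1 ≤ (V.filter (fun v => (u, v) ∈ E)).card) :
    u ∈ D := by
  by_contra huD
  have hdegD := hK.card_neighbors_le_card_of_dominates hDU hdom hu huD
  omega

theorem stmt_13 {α : Type*} [DecidableEq α] (k : ℕ)
    (U V : Finset α) (hUV : Disjoint U V)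
    (E : Finset (α × α)) (hE : E ⊆ U ×ˢ V)
    (hK : K22Free U V E)
    (D : Finset α) (hDU : D ⊆ U) (hdom : Dominates E D V) (hDk : D.card ≤ k)
    (u : α) (hu : u ∈ U)
    (hdeg : k + 1 ≤ (V.filter (fun v => (u, v) ∈ E)).card) :
    u ∈ D :=
  stmt_13_general k U V E hK D hDU hdom hDk u hu hdeg
end

section
/- Let J be a finite subset of {1,…,n} with |J| ≥ 2 and let T' be a finite set of triples such that head(t) ⊆ J for every t ∈ T', some t ∈ T' has head(t) = J, and for every t ∈ T' and every S ∈ {tail1(t), tail2(t)} with |S| ≥ 2 there exists t' ∈ T' with head(t') = S. Then |T'| ≥ |J| − 1. (Linearizing a single monomial of degree |J| requires at least |J| − 1 auxiliary variables.) -/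
open Finset

theorem stmt_15 (n : ℕ) (J : Finset (Fin n)) (hJ : 2 ≤ J.card)
    (T' : Finset (Finset (Fin n) × Finset (Fin n)))
    (hT : ∀ t ∈ T', t.1.Nonempty ∧ t.2.Nonempty ∧ Disjoint t.1 t.2)
    (hsub : ∀ t ∈ T', t.1 ∪ t.2 ⊆ J)
    (htop : ∃ t ∈ T', t.1 ∪ t.2 = J)
    (hclose : ∀ t ∈ T',
      (2 ≤ t.1.card → ∃ t' ∈ T', t'.1 ∪ t'.2 = t.1) ∧
      (2 ≤ t.2.card → ∃ t' ∈ T', t'.1 ∪ t'.2 = t.2)) :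
    J.card - 1 ≤ T'.card := by
  obtain ⟨t0, ht0, ht0h⟩ := htop
  suffices h : ∀ k (S : Finset (Fin n)), S.card ≤ k →
      (∃ t ∈ T', t.1 ∪ t.2 = S) →
      S.card - 1 ≤ (T'.filter (fun t => t.1 ∪ t.2 ⊆ S)).card by
    calc J.card - 1 ≤ (T'.filter (fun t => t.1 ∪ t.2 ⊆ J)).card :=
          h J.card J le_rfl ⟨t0, ht0, ht0h⟩
      _ ≤ T'.card := card_filter_le _ _
  intro k
  induction k with
  | zero => intro S hS _; omega
  | succ k ih =>
    rintro S hSk ⟨t, htT, hth⟩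
    obtain ⟨hA, hB, hdisj⟩ := hT t htT
    have hcard : t.1.card + t.2.card = S.card := by
      rw [← hth, card_union_of_disjoint hdisj]
    have hA1 : 1 ≤ t.1.card := card_pos.mpr hA
    have hB1 : 1 ≤ t.2.card := card_pos.mpr hB
    have claim : ∀ X : Finset (Fin n),
        (2 ≤ X.card → ∃ t' ∈ T', t'.1 ∪ t'.2 = X) → X.card < S.card →
        X.card - 1 ≤ (T'.filter (fun u => u.1 ∪ u.2 ⊆ X)).card := by
      intro X hcl hlt
      rcases le_or_gt X.card 1 with h1 | h1
      · omega
      · exact ih X (by omega) (hcl h1)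
    have hcl := hclose t htT
    have h1 := claim t.1 hcl.1 (by omega)
    have h2 := claim t.2 hcl.2 (by omega)
    set FA := T'.filter (fun u => u.1 ∪ u.2 ⊆ t.1) with hFA
    set FB := T'.filter (fun u => u.1 ∪ u.2 ⊆ t.2) with hFB
    set FS := T'.filter (fun u => u.1 ∪ u.2 ⊆ S) with hFS
    have hdisjAB : Disjoint FA FB := by
      rw [disjoint_left]
      intro u huA huB
      simp only [hFA, hFB, mem_filter] at huA huB
      obtain ⟨hu1, _, _⟩ := hT u huA.1
      have : u.1 ⊆ t.1 := (subset_union_left).trans huA.2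
      have h2' : u.1 ⊆ t.2 := (subset_union_left).trans huB.2
      obtain ⟨x, hx⟩ := hu1
      exact disjoint_left.mp hdisj (this hx) (h2' hx)
    have htnA : t ∉ FA := by
      simp only [hFA, mem_filter, not_and]
      intro _
      intro hsub'
      have : t.2 ⊆ t.1 := (subset_union_right).trans hsub'
      obtain ⟨x, hx⟩ := hB
      exact (disjoint_left.mp hdisj (this hx) hx)
    have htnB : t ∉ FB := by
      simp only [hFB, mem_filter, not_and]
      intro _ hsub'
      have : t.1 ⊆ t.2 := (subset_union_left).trans hsub'
      obtain ⟨x, hx⟩ := hA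
      exact (disjoint_left.mp hdisj hx (this hx))
    have hsubS : insert t (FA ∪ FB) ⊆ FS := by
      intro u hu
      simp only [mem_insert, mem_union] at hu
      rcases hu with rfl | hu | hu
      · simp only [hFS, mem_filter]; exact ⟨htT, hth.le⟩
      · simp only [hFA, mem_filter] at hu
        simp only [hFS, mem_filter]
        refine ⟨hu.1, hu.2.trans ?_⟩
        rw [← hth]; exact subset_union_left
      · simp only [hFB, mem_filter] at hu
        simp only [hFS, mem_filter]
        refine ⟨hu.1, hu.2.trans ?_⟩
        rw [← hth]; exact subset_union_right
    have hcardins : (insert t (FA ∪ FB)).card = 1 + FA.card + FB.card := by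
      rw [card_insert_of_notMem (by simp [htnA, htnB]),
        card_union_of_disjoint hdisjAB]
      omega
    have := card_le_card hsubS
    rw [hcardins] at this
    omega
end
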